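/- Let G be a 3-edge-connected graph with DFS tree T. For a vertex v, let U(v) be the set of descendants u of v such that B(u) = B(v) ⊔ {e} for some back-edge e. Then for distinct vertices v ≠ v', U(v) ∩ U(v') = ∅. -/

import Mathlib

variable {V E : Type}

/-- Reachability in the multigraph with edge-endpoint map `ends`,
avoiding (i.e. after deleting) the edges in `S`. -/
def Reach (ends : E → V × V) (S : Set E) : V → V → Prop :=
  Relation.ReflTransGen (fun a b => ∃ e, e ∉ S ∧ (ends e = (a, b) ∨ ends e = (b, a)))

/-- The multigraph is connected. -/
def Connected (ends : E → V × V) : Prop := ∀ u v : V, Reach ends ∅ u v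

/-- `u` and `v` are `k`-edge-connected: no set of at most `k - 1` edges separates them. -/
def KConn (ends : E → V × V) (k : ℕ) (u v : V) : Prop :=
  ∀ S : Finset E, S.card ≤ k - 1 → Reach ends (↑S) u v

/-- The multigraph is `k`-edge-connected: no edge cut of size less than `k`. -/
def GraphKConn (ends : E → V × V) (k : ℕ) : Prop :=
  ∀ S : Finset E, S.card < k → ∀ u v : V, Reach ends (↑S) u v

/-- `S` is an edge cut: removing it disconnects the graph. -/
def IsCutSet (ends : E → V × V) (S : Set E) : Prop :=
  ∃ u v : V, ¬ Reach ends S u v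

/-- A (candidate) DFS tree on the multigraph `ends : E → V × V`: a root, a parent
function, a choice of a tree edge for each non-root vertex, and a preorder numbering. -/
structure DFSTree (V E : Type) where
  ends : E → V × V
  root : V
  parent : V → V
  treeEdge : V → E
  pre : V → ℕ

namespace DFSTree

variable (t : DFSTree V E)

/-- `t.Anc a b` : `a` is an ancestor of `b` (every vertex is an ancestor of itself). -/
def Anc (a b : V) : Prop :=
  Relation.ReflTransGen (fun x y => x ≠ t.root ∧ y = t.parent x) b a

/-- `a` is a proper ancestor of `b`. -/
def ProperAnc (a b : V) : Prop := t.Anc a b ∧ a ≠ b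

def IsTreeEdge (e : E) : Prop := ∃ v, v ≠ t.root ∧ e = t.treeEdge v

/-- The set `B(v)`: back-edges `(x, y)` with `x` a descendant of `v` and `y` a
proper ancestor of `v`. -/
def B (v : V) : Set E :=
  {e | ¬ t.IsTreeEdge e ∧ t.Anc v (t.ends e).1 ∧ t.ProperAnc (t.ends e).2 v}

/-- `m` is the nearest common ancestor of the set `S` of vertices. -/
def IsNCA (S : Set V) (m : V) : Prop :=
  (∀ x ∈ S, t.Anc m x) ∧ ∀ m' : V, (∀ x ∈ S, t.Anc m' x) → t.Anc m' m

/-- `m = M(v)`: the nearest common ancestor of all lower ends of back-edges in `B(v)`. -/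
def IsM (v m : V) : Prop := t.IsNCA {x | ∃ e ∈ t.B v, (t.ends e).1 = x} m

/-- `h = high(v)`: the highest (in preorder) upper end of a back-edge in `B(v)`. -/
def IsHigh (v h : V) : Prop :=
  (∃ e ∈ t.B v, (t.ends e).2 = h) ∧ ∀ e ∈ t.B v, t.pre (t.ends e).2 ≤ t.pre h

/-- `l = low(v)`: the lowest (in preorder) upper end of a back-edge in `B(v)`. -/
def IsLow (v l : V) : Prop :=
  (∃ e ∈ t.B v, (t.ends e).2 = l) ∧ ∀ e ∈ t.B v, t.pre l ≤ t.pre (t.ends e).2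

/-- `v` and `w` have the same `M`-value. -/
def SameM (v w : V) : Prop := ∃ m, t.IsM v m ∧ t.IsM w m

/-- `n = nextM(v)`: the greatest vertex smaller than `v` with the same `M`-value. -/
def IsNextM (v n : V) : Prop :=
  t.pre n < t.pre v ∧ t.SameM v n ∧
    ∀ z, t.pre z < t.pre v → t.SameM v z → t.pre z ≤ t.pre n

/-- `l = lastM(v)`: the smallest vertex with the same `M`-value as `v`. -/
def IsLastM (v l : V) : Prop :=
  t.SameM v l ∧ ∀ z, t.SameM v z → t.pre l ≤ t.pre z

/-- `t` really is a DFS spanning tree of the connected multigraph `ends`. -/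
structure IsDFS : Prop where
  conn : Connected t.ends
  parent_root : t.parent t.root = t.root
  tree_ends : ∀ v, v ≠ t.root → t.ends (t.treeEdge v) = (v, t.parent v)
  treeEdge_inj : ∀ v w, v ≠ t.root → w ≠ t.root → t.treeEdge v = t.treeEdge w → v = w
  back : ∀ e, ¬ t.IsTreeEdge e → t.Anc (t.ends e).2 (t.ends e).1
  pre_inj : Function.Injective t.pre
  pre_mono : ∀ a b, t.Anc a b → t.pre a ≤ t.pre b
  pre_interval : ∀ a b : V,
    t.pre a ≤ t.pre b → t.pre b < t.pre a + {x | t.Anc a x}.ncard → t.Anc a b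

end DFSTree

/-! If `u ∈ U(v) ∩ U(v')` with `v` an ancestor of `v'`, then every edge of `B(v) ⊆ B(u)` has its lower
end below `v'` and its upper end above `v'`, so `B(v) ⊆ B(v')`; comparing `B(u) = B(v) ⊔ {e} = B(v') ⊔ {e'}`
then forces `B(v) = B(v')`. But if `v ≠ v'`, the vertices below `v` and not below `v'` would be cut
off from the rest of the graph by the two tree edges above `v` and `v'` alone, since an edge of
`B(v) = B(v')` has neither end in that set. -/

lemma Set.eq_of_subset_of_insert_eq {α : Type*} {s s' : Set α} {a a' : α} (hs : s ⊆ s')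
    (h : insert a s = insert a' s') (ha' : a' ∉ s') : s = s' := by
  have hmem : a' ∈ insert a s := h ▸ Set.mem_insert a' s'
  have ha : a' = a := by
    by_contra hne
    exact ha' (hs (Set.mem_of_mem_insert_of_ne hmem hne))
  subst ha
  refine hs.antisymm fun x hx => ?_
  have hx' : x ∈ insert a' s := h ▸ Set.mem_insert_of_mem a' hx
  exact Set.mem_of_mem_insert_of_ne hx' fun hxa => ha' (hxa ▸ hx)

lemma reach_mem_iff {ends : E → V × V} {S : Set E} {A : Set V}
    (hA : ∀ e ∉ S, (ends e).1 ∈ A ↔ (ends e).2 ∈ A) {a b : V} (h : Reach ends S a b) :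
    a ∈ A ↔ b ∈ A := by
  induction h with
  | refl => rfl
  | tail _ hbc ih =>
    obtain ⟨e, heS, hends | hends⟩ := hbc <;>
    · have := hA e heS
      rw [hends] at this
      exact ih.trans (by simpa [Iff.comm] using this)

namespace DFSTree

variable {t : DFSTree V E}

lemma anc_refl (a : V) : t.Anc a a := Relation.ReflTransGen.refl

lemma Anc.trans {a b c : V} (hab : t.Anc a b) (hbc : t.Anc b c) : t.Anc a c :=
  Relation.ReflTransGen.trans hbc hab

lemma anc_antisymm (ht : t.IsDFS) {a b : V} (hab : t.Anc a b) (hba : t.Anc b a) : a = b :=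
  ht.pre_inj ((ht.pre_mono a b hab).antisymm (ht.pre_mono b a hba))

lemma anc_or_anc_of_anc {a b u : V} (ha : t.Anc a u) (hb : t.Anc b u) :
    t.Anc a b ∨ t.Anc b a := by
  induction ha using Relation.ReflTransGen.head_induction_on with
  | refl => exact Or.inr hb
  | head hstep hrest ih =>
    rcases hb.cases_head with rfl | ⟨d, hd, hdb⟩
    · exact Or.inl (Relation.ReflTransGen.head hstep hrest)
    · obtain ⟨-, rfl⟩ := hstep
      obtain ⟨-, rfl⟩ := hd
      exact ih hdb

lemma anc_parent_iff {z w : V} (hw : w ≠ t.root) (hzw : z ≠ w) :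
    t.Anc z (t.parent w) ↔ t.Anc z w := by
  refine ⟨Relation.ReflTransGen.head ⟨hw, rfl⟩, fun h => ?_⟩
  rcases h.cases_head with rfl | ⟨d, ⟨-, rfl⟩, hd⟩
  · exact absurd rfl hzw
  · exact hd

lemma anc_fst_iff_anc_snd (ht : t.IsDFS) {w : V} {e : E} (hB : e ∉ t.B w)
    (hT : e ≠ t.treeEdge w) : t.Anc w (t.ends e).1 ↔ t.Anc w (t.ends e).2 := by
  by_cases htree : t.IsTreeEdge e
  · obtain ⟨w', hw', rfl⟩ := htree
    rw [ht.tree_ends w' hw', anc_parent_iff hw' (by rintro rfl; exact hT rfl)]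
  · have hback := ht.back e htree
    refine ⟨fun hx => ?_, fun hy => hy.trans hback⟩
    by_contra hy
    rcases anc_or_anc_of_anc hx hback with h | h
    · exact hy h
    · exact hB ⟨htree, hx, h, fun hyw => hy (by rw [hyw]; exact anc_refl w)⟩

lemma eq_of_anc_of_B_eq (ht : t.IsDFS) (h3 : GraphKConn t.ends 3) {v w : V}
    (hvw : t.Anc v w) (hB : t.B v = t.B w) : v = w := by
  classical
  by_contra hne
  let A : Set V := {x | t.Anc v x ∧ ¬ t.Anc w x}
  let S : Finset E := {t.treeEdge v, t.treeEdge w}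
  have hclosed : ∀ e ∉ (S : Set E), (t.ends e).1 ∈ A ↔ (t.ends e).2 ∈ A := by
    intro e heS
    simp only [S, Finset.coe_insert, Finset.coe_singleton, Set.mem_insert_iff,
      Set.mem_singleton_iff, not_or] at heS
    by_cases he : e ∈ t.B v
    · have hwx : t.Anc w (t.ends e).1 := (hB ▸ he : e ∈ t.B w).2.1
      obtain ⟨-, -, hyv, hyne⟩ := he
      exact iff_of_false (fun hx => hx.2 hwx)
        fun hy => hyne (anc_antisymm ht hyv hy.1)
    · have hv := anc_fst_iff_anc_snd ht he heS.1
      have hw := anc_fst_iff_anc_snd ht (hB ▸ he) heS.2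
      simp only [A, Set.mem_ofPred_eq, hv, hw]
  have hcard : S.card < 3 := (Finset.card_le_two).trans_lt (by norm_num)
  have hvA : v ∈ A := ⟨anc_refl v, fun hwv => hne (anc_antisymm ht hvw hwv)⟩
  exact ((reach_mem_iff hclosed (h3 S hcard v w)).mp hvA).2 (anc_refl w)

lemma B_inter_subset_of_anc (ht : t.IsDFS) {u v w : V} (hvw : t.Anc v w) (hwu : t.Anc w u) :
    t.B u ∩ t.B v ⊆ t.B w := by
  rintro e ⟨⟨htree, hux, -⟩, -, -, hyv, hyne⟩
  refine ⟨htree, hwu.trans hux, hyv.trans hvw, ?_⟩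
  rintro rfl
  exact hyne (anc_antisymm ht hyv hvw)

def U (t : DFSTree V E) (v : V) : Set V :=
  {u | t.Anc v u ∧ ∃ e, t.B u = insert e (t.B v) ∧ e ∉ t.B v}

lemma eq_of_anc_of_mem_U (ht : t.IsDFS) (h3 : GraphKConn t.ends 3) {u v w : V}
    (hvw : t.Anc v w) (hv : u ∈ t.U v) (hw : u ∈ t.U w) : v = w := by
  obtain ⟨-, e, hBv, -⟩ := hv
  obtain ⟨hwu, e', hBw, he'⟩ := hw
  have hsub : t.B v ⊆ t.B w := fun x hx =>
    B_inter_subset_of_anc ht hvw hwu ⟨hBv ▸ Set.mem_insert_of_mem e hx, hx⟩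
  exact eq_of_anc_of_B_eq ht h3 hvw
    (Set.eq_of_subset_of_insert_eq hsub (hBv.symm.trans hBw) he')

end DFSTree

/-- Let `U(v)` be the set of descendants `u` of `v` with `B(u) = B(v) ⊔ {e}` for
some back-edge `e`. Then `U(v)` and `U(v')` are disjoint for `v ≠ v'`. -/
theorem Usets_disjoint (t : DFSTree V E) (ht : t.IsDFS)
    (h3 : GraphKConn t.ends 3) (v v' : V) (hne : v ≠ v') :
    {u | t.Anc v u ∧ ∃ e, t.B u = insert e (t.B v) ∧ e ∉ t.B v} ∩
      {u | t.Anc v' u ∧ ∃ e, t.B u = insert e (t.B v') ∧ e ∉ t.B v'} = ∅ := by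
  refine Set.eq_empty_of_forall_notMem fun u ⟨hv, hv'⟩ => hne ?_
  rcases DFSTree.anc_or_anc_of_anc hv.1 hv'.1 with h | h
  · exact DFSTree.eq_of_anc_of_mem_U ht h3 h hv hv'
  · exact (DFSTree.eq_of_anc_of_mem_U ht h3 h hv' hv).symm
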